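/- Let X and Y be finite nonempty sets, let π₀, π₁ ≥ 0 with π₀ + π₁ = 1, and for each s ∈ {0,1} let P_s be a probability distribution on X × Y with marginal Q_s(x) = ∑_y P_s(x, y). For a pair of Markov kernels (K₀, K₁) from X to X, define P̃_s(x̃, y) = ∑_x K_s(x̃ | x)·P_s(x, y) and Q̃_s(x̃) = ∑_x K_s(x̃ | x)·Q_s(x), and for ρ ≥ 0 define V(ρ) = inf { π₀·d_TV(P̃₀, P₀) + π₁·d_TV(P̃₁, P₁) : (K₀, K₁) Markov kernels with d_TV(Q̃₁, Q̃₀) ≤ ρ }. Then V(ρ) → V(0) as ρ → 0⁺, i.e., the optimal value of the approximate-fairness pre-processing problem converges to the optimal value under exact statistical parity. -/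

import Mathlib

/-!
Exact parity costs at most `π₁ ρ` more than `ρ`-approximate parity, so
`V 0 - π₁ ρ ≤ V ρ ≤ V 0`. Given kernels with `dTV (K₁ Q₁) (K₀ Q₀) ≤ ρ`, post-compose `K₁` with
a kernel `T` that transports `q = K₁ Q₁` onto `q' = K₀ Q₀` by leaving the mass `min q q'` in
place and moving only the excess `(q - q')⁺`, of total mass `dTV q q' ≤ ρ`. Any kernel changes a
joint distribution in total variation by at most the mass it moves off the diagonal, so the new
repaired distribution `T K₁ P₁` is within `ρ` of `K₁ P₁`, and the triangle inequality does the rest.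
-/

/-- A probability distribution on a finite type: nonnegative and sums to one. -/
def IsProbDist {Z : Type*} [Fintype Z] (p : Z → ℝ) : Prop :=
  (∀ z, 0 ≤ p z) ∧ ∑ z, p z = 1

/-- Total variation distance between two distributions on a finite type. -/
noncomputable def dTV {Z : Type*} [Fintype Z] (p q : Z → ℝ) : ℝ :=
  (1 / 2) * ∑ z, |p z - q z|

/-- A Markov kernel from `X` to `X`: `K x' x` is the probability of moving to `x'`
from `x`, so each column `K · x` is a probability distribution. -/
def IsMarkovKernel {X : Type*} [Fintype X] (K : X → X → ℝ) : Prop :=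
  ∀ x, IsProbDist (fun x' => K x' x)

/-- Repaired joint distribution `P̃` obtained from `P` by the kernel `K` acting on
the `X`-component. -/
noncomputable def repairJoint {X Y : Type*} [Fintype X] [Fintype Y]
    (K : X → X → ℝ) (P : X × Y → ℝ) : X × Y → ℝ :=
  fun p => ∑ x : X, K p.1 x * P (x, p.2)

/-- Pushforward of a distribution on `X` through the kernel `K`. -/
noncomputable def pushforward {X : Type*} [Fintype X] (K : X → X → ℝ) (q : X → ℝ) :
    X → ℝ := fun x' => ∑ x, K x' x * q x

open Finset

lemma posPart_sub_le_of_nonneg {a b : ℝ} (ha : 0 ≤ a) (hb : 0 ≤ b) : (a - b)⁺ ≤ a := by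
  rw [posPart_def]
  exact sup_le (by linarith) ha

lemma posPart_sub_div_mul_self {a b : ℝ} (ha : 0 ≤ a) (hb : 0 ≤ b) :
    (a - b)⁺ / a * a = (a - b)⁺ :=
  div_mul_cancel_of_imp fun h => le_antisymm (h ▸ posPart_sub_le_of_nonneg ha hb) (posPart_nonneg _)

section TotalVariation

variable {Z : Type*} [Fintype Z]

lemma dTV_nonneg (p q : Z → ℝ) : 0 ≤ dTV p q := by
  unfold dTV
  positivity

lemma dTV_self (p : Z → ℝ) : dTV p p = 0 := by
  simp [dTV]

lemma dTV_triangle (p q r : Z → ℝ) : dTV p r ≤ dTV p q + dTV q r := by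
  unfold dTV
  rw [← mul_add, ← sum_add_distrib]
  gcongr with z
  exact abs_sub_le _ _ _

lemma sum_posPart_sub_eq_sum_negPart_sub {p q : Z → ℝ} (h : ∑ z, p z = ∑ z, q z) :
    ∑ z, (p z - q z)⁺ = ∑ z, (p z - q z)⁻ := by
  rw [← sub_eq_zero, ← sum_sub_distrib]
  simp only [posPart_sub_negPart]
  rw [sum_sub_distrib, h, sub_self]

lemma sum_posPart_sub_eq_dTV {p q : Z → ℝ} (h : ∑ z, p z = ∑ z, q z) :
    ∑ z, (p z - q z)⁺ = dTV p q := by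
  have habs : ∑ z, (p z - q z)⁺ + ∑ z, (p z - q z)⁻ = ∑ z, |p z - q z| := by
    rw [← sum_add_distrib]
    simp only [posPart_add_negPart]
  rw [dTV, ← habs, ← sum_posPart_sub_eq_sum_negPart_sub h]
  ring

lemma sum_negPart_sub_eq_dTV {p q : Z → ℝ} (h : ∑ z, p z = ∑ z, q z) :
    ∑ z, (p z - q z)⁻ = dTV p q := by
  rw [← sum_posPart_sub_eq_sum_negPart_sub h, sum_posPart_sub_eq_dTV h]

lemma posPart_sub_le_dTV {p q : Z → ℝ} (h : ∑ z, p z = ∑ z, q z) (z : Z) :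
    (p z - q z)⁺ ≤ dTV p q :=
  sum_posPart_sub_eq_dTV h ▸ single_le_sum (fun z _ => posPart_nonneg (p z - q z)) (mem_univ z)

lemma negPart_sub_le_dTV {p q : Z → ℝ} (h : ∑ z, p z = ∑ z, q z) (z : Z) :
    (p z - q z)⁻ ≤ dTV p q :=
  sum_negPart_sub_eq_dTV h ▸ single_le_sum (fun z _ => negPart_nonneg (p z - q z)) (mem_univ z)

lemma IsProbDist.le_one {p : Z → ℝ} (hp : IsProbDist p) (z : Z) : p z ≤ 1 :=
  hp.2 ▸ single_le_sum (fun z _ => hp.1 z) (mem_univ z)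

end TotalVariation

section Kernels

variable {X Y : Type*} [Fintype X] [Fintype Y]

def marginal (P : X × Y → ℝ) : X → ℝ := fun x => ∑ y, P (x, y)

def idKernel [DecidableEq X] : X → X → ℝ := fun x' x => if x' = x then 1 else 0

def kernelComp (T K : X → X → ℝ) : X → X → ℝ := fun x' x => ∑ z, T x' z * K z x

lemma IsProbDist.pushforward {K : X → X → ℝ} {q : X → ℝ} (hq : IsProbDist q)
    (hK : IsMarkovKernel K) : IsProbDist (pushforward K q) := by
  refine ⟨fun x' => sum_nonneg fun x _ => mul_nonneg ((hK x).1 x') (hq.1 x), ?_⟩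
  unfold _root_.pushforward
  rw [sum_comm]
  simp only [← sum_mul, (hK _).2, one_mul]
  exact hq.2

lemma IsMarkovKernel.kernelComp {T K : X → X → ℝ} (hT : IsMarkovKernel T)
    (hK : IsMarkovKernel K) : IsMarkovKernel (kernelComp T K) :=
  fun x => (hK x).pushforward hT

lemma pushforward_kernelComp (T K : X → X → ℝ) (q : X → ℝ) :
    pushforward (kernelComp T K) q = pushforward T (pushforward K q) := by
  ext x'
  simp only [pushforward, kernelComp, sum_mul, mul_sum, mul_assoc]
  exact sum_comm

lemma isMarkovKernel_idKernel [DecidableEq X] : IsMarkovKernel (idKernel : X → X → ℝ) :=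
  fun x => ⟨fun x' => by simp only [idKernel]; split_ifs <;> norm_num, by simp [idKernel]⟩

lemma pushforward_idKernel [DecidableEq X] (q : X → ℝ) : pushforward idKernel q = q := by
  ext x'
  simp [pushforward, idKernel]

lemma repairJoint_kernelComp (T K : X → X → ℝ) (P : X × Y → ℝ) :
    repairJoint (kernelComp T K) P = repairJoint T (repairJoint K P) := by
  ext ⟨x', y⟩
  exact congrFun (pushforward_kernelComp T K fun x => P (x, y)) x'

lemma marginal_repairJoint (K : X → X → ℝ) (P : X × Y → ℝ) :
    marginal (repairJoint K P) = pushforward K (marginal P) := by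
  ext x'
  simp only [marginal, repairJoint, pushforward, mul_sum]
  exact sum_comm

lemma IsProbDist.marginal {P : X × Y → ℝ} (hP : IsProbDist P) : IsProbDist (marginal P) :=
  ⟨fun x => sum_nonneg fun y _ => hP.1 _, by rw [← hP.2, Fintype.sum_prod_type]; rfl⟩

lemma repairJoint_nonneg {K : X → X → ℝ} {P : X × Y → ℝ} (hK : IsMarkovKernel K)
    (hP : ∀ p, 0 ≤ P p) (p : X × Y) : 0 ≤ repairJoint K P p :=
  sum_nonneg fun x _ => mul_nonneg ((hK x).1 p.1) (hP _)

lemma IsProbDist.sum_abs_sub_idKernel [DecidableEq X] {p : X → ℝ} (hp : IsProbDist p) (z : X) :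
    ∑ x, |p x - idKernel x z| = 2 * (1 - p z) := by
  have h : ∀ x, |p x - idKernel x z| = p x + idKernel x z - 2 * (idKernel x z * p x) := by
    intro x
    unfold idKernel
    split_ifs with hx
    · subst hx
      rw [abs_of_nonpos (by linarith [hp.le_one x])]
      ring
    · simp [abs_of_nonneg (hp.1 x)]
  rw [sum_congr rfl fun x _ => h x]
  simp [sum_sub_distrib, sum_add_distrib, hp.2, idKernel]
  ring

lemma dTV_pushforward_self_le {T : X → X → ℝ} (hT : IsMarkovKernel T) {g : X → ℝ}
    (hg : ∀ x, 0 ≤ g x) : dTV (pushforward T g) g ≤ ∑ z, (1 - T z z) * g z := by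
  classical
  have hpoint : ∀ x', |pushforward T g x' - g x'| ≤ ∑ z, |T x' z - idKernel x' z| * g z := by
    intro x'
    have h : pushforward T g x' - g x' = ∑ z, (T x' z - idKernel x' z) * g z := by
      simp [pushforward, idKernel, sub_mul, sum_sub_distrib]
    rw [h]
    refine (abs_sum_le_sum_abs _ _).trans (le_of_eq ?_)
    simp only [abs_mul, abs_of_nonneg (hg _)]
  calc dTV (pushforward T g) g
      ≤ 1 / 2 * ∑ x', ∑ z, |T x' z - idKernel x' z| * g z := by
        unfold dTV
        gcongr with x'
        exact hpoint x'
    _ = 1 / 2 * ∑ z, (∑ x', |T x' z - idKernel x' z|) * g z := by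
        rw [sum_comm]
        simp only [sum_mul]
    _ = ∑ z, (1 - T z z) * g z := by
        rw [mul_sum]
        refine sum_congr rfl fun z _ => ?_
        rw [(hT z).sum_abs_sub_idKernel z]
        ring

lemma dTV_repairJoint_self_le {T : X → X → ℝ} (hT : IsMarkovKernel T) {R : X × Y → ℝ}
    (hR : ∀ p, 0 ≤ R p) : dTV (repairJoint T R) R ≤ ∑ z, (1 - T z z) * marginal R z := by
  calc dTV (repairJoint T R) R
      = ∑ y, dTV (pushforward T fun x => R (x, y)) fun x => R (x, y) := by
        simp only [dTV, ← mul_sum]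
        rw [Fintype.sum_prod_type_right]
        rfl
    _ ≤ ∑ y, ∑ z, (1 - T z z) * R (z, y) := by
        gcongr with y
        exact dTV_pushforward_self_le hT fun x => hR _
    _ = ∑ z, (1 - T z z) * marginal R z := by
        simp only [marginal, mul_sum]
        exact sum_comm

end Kernels

section Transport

variable {X : Type*} [Fintype X] [DecidableEq X]

/-- Each `x` keeps the fraction `min (q x) (q' x) / q x` of its mass and spreads the rest over
the points where `q'` exceeds `q`, in proportion to the deficit `(q - q')⁻`. -/
noncomputable def transportKernel (q q' : X → ℝ) : X → X → ℝ :=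
  fun x' x => (1 - (q x - q' x)⁺ / q x) * idKernel x' x
    + (q x - q' x)⁺ / q x * ((q x' - q' x')⁻ / dTV q q')

variable {q q' : X → ℝ}

lemma isMarkovKernel_transportKernel (hq : IsProbDist q) (hq' : IsProbDist q') :
    IsMarkovKernel (transportKernel q q') := by
  have hsum : ∑ z, q z = ∑ z, q' z := by rw [hq.2, hq'.2]
  intro x
  have hr0 : 0 ≤ (q x - q' x)⁺ / q x := div_nonneg (posPart_nonneg _) (hq.1 x)
  have hr1 : (q x - q' x)⁺ / q x ≤ 1 :=
    div_le_one_of_le₀ (posPart_sub_le_of_nonneg (hq.1 x) (hq'.1 x)) (hq.1 x)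
  refine ⟨fun x' => ?_, ?_⟩
  · have := (isMarkovKernel_idKernel x).1 x'
    have := dTV_nonneg q q'
    have := negPart_nonneg (q x' - q' x')
    unfold transportKernel
    positivity
  · -- if `dTV q q' = 0` there is no excess mass at `x`, so the ratio vanishes
    have hr : (q x - q' x)⁺ / q x * (dTV q q' / dTV q q') = (q x - q' x)⁺ / q x := by
      rw [← mul_div_assoc]
      refine mul_div_cancel_of_imp fun h => ?_
      have : (q x - q' x)⁺ = 0 :=
        le_antisymm (h ▸ posPart_sub_le_dTV hsum x) (posPart_nonneg _)
      simp [this]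
    simp only [transportKernel, sum_add_distrib, ← mul_sum, ← sum_div,
      sum_negPart_sub_eq_dTV hsum, hr]
    simp [idKernel]

lemma pushforward_transportKernel (hq : IsProbDist q) (hq' : IsProbDist q') :
    pushforward (transportKernel q q') q = q' := by
  have hsum : ∑ z, q z = ∑ z, q' z := by rw [hq.2, hq'.2]
  ext x'
  have hexcess : ∀ x, (q x - q' x)⁺ / q x * q x = (q x - q' x)⁺ :=
    fun x => posPart_sub_div_mul_self (hq.1 x) (hq'.1 x)
  have hdeficit : (q x' - q' x')⁻ / dTV q q' * dTV q q' = (q x' - q' x')⁻ :=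
    div_mul_cancel_of_imp fun h => le_antisymm (h ▸ negPart_sub_le_dTV hsum x') (negPart_nonneg _)
  calc pushforward (transportKernel q q') q x'
      = (1 - (q x' - q' x')⁺ / q x') * q x'
          + (q x' - q' x')⁻ / dTV q q' * ∑ x, (q x - q' x)⁺ / q x * q x := by
        simp only [pushforward, transportKernel, add_mul, sum_add_distrib, mul_sum]
        congr 1
        · simp [idKernel]
        · exact sum_congr rfl fun x _ => by ring
    _ = q' x' := by
        rw [sub_mul, hexcess, sum_congr rfl fun x _ => hexcess x, sum_posPart_sub_eq_dTV hsum,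
          hdeficit, one_mul]
        linarith [posPart_sub_negPart (q x' - q' x')]

lemma sum_one_sub_transportKernel_self_mul_le (hq : IsProbDist q) (hq' : IsProbDist q') :
    ∑ z, (1 - transportKernel q q' z z) * q z ≤ dTV q q' := by
  have hsum : ∑ z, q z = ∑ z, q' z := by rw [hq.2, hq'.2]
  rw [← sum_posPart_sub_eq_dTV hsum]
  gcongr with z
  have hshare : 0 ≤ (q z - q' z)⁻ / dTV q q' :=
    div_nonneg (negPart_nonneg _) (dTV_nonneg q q')
  calc (1 - transportKernel q q' z z) * q z
      = (q z - q' z)⁺ / q z * q z * (1 - (q z - q' z)⁻ / dTV q q') := by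
        simp only [transportKernel, idKernel, if_true]
        ring
    _ ≤ (q z - q' z)⁺ / q z * q z :=
        mul_le_of_le_one_right
          (mul_nonneg (div_nonneg (posPart_nonneg _) (hq.1 z)) (hq.1 z)) (by linarith)
    _ = (q z - q' z)⁺ := posPart_sub_div_mul_self (hq.1 z) (hq'.1 z)

end Transport

lemma exists_repair_pushforward_eq {X Y : Type*} [Fintype X] [Fintype Y] {K : X → X → ℝ}
    {P : X × Y → ℝ} {q' : X → ℝ} (hK : IsMarkovKernel K) (hP : IsProbDist P)
    (hq' : IsProbDist q') :
    ∃ K', IsMarkovKernel K' ∧ pushforward K' (marginal P) = q' ∧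
      dTV (repairJoint K' P) P
        ≤ dTV (repairJoint K P) P + dTV (pushforward K (marginal P)) q' := by
  classical
  set q := pushforward K (marginal P)
  have hq : IsProbDist q := hP.marginal.pushforward hK
  have hT := isMarkovKernel_transportKernel hq hq'
  refine ⟨kernelComp (transportKernel q q') K, hT.kernelComp hK,
    by rw [pushforward_kernelComp, pushforward_transportKernel hq hq'], ?_⟩
  have hmoved : dTV (repairJoint (transportKernel q q') (repairJoint K P)) (repairJoint K P)
      ≤ dTV q q' :=
    calc _ ≤ ∑ z, (1 - transportKernel q q' z z) * marginal (repairJoint K P) z :=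
          dTV_repairJoint_self_le hT (repairJoint_nonneg hK hP.1)
      _ ≤ dTV q q' := by
          rw [marginal_repairJoint]
          exact sum_one_sub_transportKernel_self_mul_le hq hq'
  rw [repairJoint_kernelComp]
  linarith [dTV_triangle (repairJoint (transportKernel q q') (repairJoint K P)) (repairJoint K P) P]

section ParityRepair

variable {X Y : Type*} [Fintype X] [Fintype Y]

def parityRepairCosts (π0 π1 : ℝ) (P0 P1 : X × Y → ℝ) (ρ : ℝ) : Set ℝ :=
  {v | ∃ K0 K1 : X → X → ℝ, IsMarkovKernel K0 ∧ IsMarkovKernel K1 ∧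
    dTV (pushforward K1 (marginal P1)) (pushforward K0 (marginal P0)) ≤ ρ ∧
    v = π0 * dTV (repairJoint K0 P0) P0 + π1 * dTV (repairJoint K1 P1) P1}

variable {π0 π1 : ℝ} {P0 P1 : X × Y → ℝ}

lemma parityRepairCosts_mono {ρ ρ' : ℝ} (h : ρ ≤ ρ') :
    parityRepairCosts π0 π1 P0 P1 ρ ⊆ parityRepairCosts π0 π1 P0 P1 ρ' :=
  fun _ ⟨K0, K1, hK0, hK1, hd, hv⟩ => ⟨K0, K1, hK0, hK1, hd.trans h, hv⟩

lemma parityRepairCosts_bddBelow (hπ0 : 0 ≤ π0) (hπ1 : 0 ≤ π1) (ρ : ℝ) :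
    BddBelow (parityRepairCosts π0 π1 P0 P1 ρ) := by
  refine ⟨0, fun _ ⟨K0, K1, _, _, _, hv⟩ => hv ▸ ?_⟩
  have := dTV_nonneg (repairJoint K0 P0) P0
  have := dTV_nonneg (repairJoint K1 P1) P1
  positivity

lemma parityRepairCosts_zero_nonempty (hP0 : IsProbDist P0) (hP1 : IsProbDist P1) :
    (parityRepairCosts π0 π1 P0 P1 0).Nonempty := by
  classical
  obtain ⟨K1, hK1, hpush, -⟩ :=
    exists_repair_pushforward_eq isMarkovKernel_idKernel hP1 hP0.marginal
  exact ⟨_, idKernel, K1, isMarkovKernel_idKernel, hK1,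
    by rw [pushforward_idKernel, hpush, dTV_self], rfl⟩

lemma exists_mem_parityRepairCosts_zero_le {ρ v : ℝ} (hπ1 : 0 ≤ π1) (hP0 : IsProbDist P0)
    (hP1 : IsProbDist P1) (hv : v ∈ parityRepairCosts π0 π1 P0 P1 ρ) :
    ∃ w ∈ parityRepairCosts π0 π1 P0 P1 0, w ≤ v + π1 * ρ := by
  obtain ⟨K0, K1, hK0, hK1, hd, rfl⟩ := hv
  obtain ⟨K1', hK1', hpush, hcost⟩ :=
    exists_repair_pushforward_eq hK1 hP1 (hP0.marginal.pushforward hK0)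
  refine ⟨_, ⟨K0, K1', hK0, hK1', by rw [hpush, dTV_self], rfl⟩, ?_⟩
  linarith [mul_le_mul_of_nonneg_left hcost hπ1, mul_le_mul_of_nonneg_left hd hπ1]

end ParityRepair

theorem optimal_value_tendsto_general
    {X Y : Type*} [Fintype X] [Fintype Y]
    (π0 π1 : ℝ) (hπ0 : 0 ≤ π0) (hπ1 : 0 ≤ π1)
    (P0 P1 : X × Y → ℝ) (hP0 : IsProbDist P0) (hP1 : IsProbDist P1)
    (Q0 Q1 : X → ℝ)
    (hQ0 : Q0 = fun x => ∑ y : Y, P0 (x, y))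
    (hQ1 : Q1 = fun x => ∑ y : Y, P1 (x, y))
    (V : ℝ → ℝ)
    (hV : ∀ ρ : ℝ, V ρ =
      sInf {v : ℝ | ∃ K0 K1 : X → X → ℝ, IsMarkovKernel K0 ∧ IsMarkovKernel K1 ∧
        dTV (pushforward K1 Q1) (pushforward K0 Q0) ≤ ρ ∧
        v = π0 * dTV (repairJoint K0 P0) P0 + π1 * dTV (repairJoint K1 P1) P1}) :
    Filter.Tendsto V (nhdsWithin 0 (Set.Ioi 0)) (nhds (V 0)) := by
  subst hQ0 hQ1
  set S := parityRepairCosts π0 π1 P0 P1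
  have hVS : ∀ ρ, V ρ = sInf (S ρ) := hV
  have hne : (S 0).Nonempty := parityRepairCosts_zero_nonempty hP0 hP1
  have hbdd : ∀ ρ, BddBelow (S ρ) := parityRepairCosts_bddBelow hπ0 hπ1
  have hle : ∀ ρ, 0 ≤ ρ → V ρ ≤ V 0 := fun ρ hρ => by
    rw [hVS, hVS]
    exact csInf_le_csInf (hbdd ρ) hne (parityRepairCosts_mono hρ)
  have hge : ∀ ρ, 0 ≤ ρ → V 0 - π1 * ρ ≤ V ρ := fun ρ hρ => by
    rw [hVS, hVS]
    refine le_csInf (hne.mono (parityRepairCosts_mono hρ)) fun v hv => ?_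
    obtain ⟨w, hw, hwv⟩ := exists_mem_parityRepairCosts_zero_le hπ1 hP0 hP1 hv
    linarith [csInf_le (hbdd 0) hw]
  have hlim : Filter.Tendsto (fun ρ => V 0 - π1 * ρ) (nhdsWithin 0 (Set.Ioi 0)) (nhds (V 0)) :=
    (Continuous.tendsto' (by fun_prop) 0 (V 0) (by simp)).mono_left nhdsWithin_le_nhds
  exact tendsto_of_tendsto_of_tendsto_of_le_of_le' hlim tendsto_const_nhds
    (eventually_nhdsWithin_of_forall fun ρ hρ => hge ρ (le_of_lt hρ))
    (eventually_nhdsWithin_of_forall fun ρ hρ => hle ρ (le_of_lt hρ))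

/-- the optimal value of the approximate-fairness pre-processing
problem converges, as `ρ → 0⁺`, to the optimal value under exact statistical
parity. -/
theorem optimal_value_tendsto
    {X Y : Type*} [Fintype X] [Fintype Y] [Nonempty X] [Nonempty Y]
    (π0 π1 : ℝ) (hπ0 : 0 ≤ π0) (hπ1 : 0 ≤ π1) (hπ : π0 + π1 = 1)
    (P0 P1 : X × Y → ℝ) (hP0 : IsProbDist P0) (hP1 : IsProbDist P1)
    (Q0 Q1 : X → ℝ)
    (hQ0 : Q0 = fun x => ∑ y : Y, P0 (x, y))
    (hQ1 : Q1 = fun x => ∑ y : Y, P1 (x, y))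
    (V : ℝ → ℝ)
    (hV : ∀ ρ : ℝ, V ρ =
      sInf {v : ℝ | ∃ K0 K1 : X → X → ℝ, IsMarkovKernel K0 ∧ IsMarkovKernel K1 ∧
        dTV (pushforward K1 Q1) (pushforward K0 Q0) ≤ ρ ∧
        v = π0 * dTV (repairJoint K0 P0) P0 + π1 * dTV (repairJoint K1 P1) P1}) :
    Filter.Tendsto V (nhdsWithin 0 (Set.Ioi 0)) (nhds (V 0)) :=
  optimal_value_tendsto_general π0 π1 hπ0 hπ1 P0 P1 hP0 hP1 Q0 Q1 hQ0 hQ1 V hV
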